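/- arXiv:math/0605309 — 2 statements merged into one kernel-verified Lean document; each statement's English description precedes it below -/
import Mathlib

section
/- Let k ≥ 2. Then det Ξ(λ,μ) = Σ_{L ⊆ P regular} a_L · ∏_{(i,j)∈L} λ_{ij} · ∏_{(i,j)∉L} μ_{ij}, where for each regular L the coefficient a_L is given as follows: choose for each m ∈ {1,…,k} a linear ordering of the set L_m = {(m,j) ∈ L} ∪ {(i,m) ∈ P : (i,m) ∉ L}; let V(L_m) be the Vandermonde determinant of the tuple of values (a_{ij})_{(i,j) ∈ L_m} in that order, and let s_L be the sign of the bijection of P sending the lexicographic order of P to the concatenation of the ordered lists L_1, L_2, …, L_k; then a_L = (−1)^{s_L} · ∏_{m=1}^k V(L_m), and this value is independent of the choice of orderings. -/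
namespace ReducibleSpectral

noncomputable section

/-- The row index `(i, t)` (with `t : Fin (k-1)`) corresponds to the pair `(i, j) ∈ P`
(where `P = {(i,j) : i ≠ j}`), with `j` the `t`-th element of `{0,…,k-1} \ {i}`;
this identification is order-preserving for the lexicographic orders. -/
def colToRow (k : ℕ) (i : Fin k) (t : Fin (k - 1)) : Fin k :=
  if (t : ℕ) < (i : ℕ) then ⟨t, by have := t.isLt; omega⟩
  else ⟨(t : ℕ) + 1, by have := t.isLt; have := i.isLt; omega⟩

/-- The matrix `Ξ(λ,μ)`: rows indexed by `P = {(i,j) : i ≠ j}` (in lexicographic order,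
encoded via `colToRow`), columns indexed by pairs `(m,n)`, `m ∈ {1,…,k}`, `n ∈ {0,…,k-2}`
(lexicographic); the entry at row `(i,j)`, column `(m,n)` is `λ_{ij}·a_{ij}^n` if `m = i`,
`μ_{ij}·a_{ij}^n` if `m = j`, and `0` otherwise. -/
def Xi (k : ℕ) (a lam mu : Fin k → Fin k → ℂ) :
    Matrix (Fin k × Fin (k - 1)) (Fin k × Fin (k - 1)) ℂ :=
  fun p q =>
    if q.1 = p.1 then lam p.1 (colToRow k p.1 p.2) * a p.1 (colToRow k p.1 p.2) ^ (q.2 : ℕ)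
    else if q.1 = colToRow k p.1 p.2 then
      mu p.1 (colToRow k p.1 p.2) * a p.1 (colToRow k p.1 p.2) ^ (q.2 : ℕ)
    else 0

/-- The extended theta function `ϑ(λ,μ) = det Ξ(λ,μ)`. -/
def theta (k : ℕ) (a lam mu : Fin k → Fin k → ℂ) : ℂ := (Xi k a lam mu).det

/-- The index set `P = {(i,j) : i,j ∈ {1,…,k}, i ≠ j}` as a finset. -/
def Pfin (k : ℕ) : Finset (Fin k × Fin k) :=
  Finset.univ.filter fun p => p.1 ≠ p.2

/-- For `L ⊆ P`, the set `L_i = {(i,j) ∈ L} ∪ {(m,i) ∈ P : (m,i) ∉ L}`. -/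
def Lset (k : ℕ) (L : Finset (Fin k × Fin k)) (i : Fin k) : Finset (Fin k × Fin k) :=
  (L.filter fun p => p.1 = i) ∪ ((Pfin k \ L).filter fun p => p.2 = i)

/-- `L ⊆ P` is regular iff every `L_i` has cardinality `k - 1`. -/
def IsRegular (k : ℕ) (L : Finset (Fin k × Fin k)) : Prop :=
  ∀ i : Fin k, (Lset k L i).card = k - 1


/-- Lexicographic strict order on pairs in `{1,…,k} × {1,…,k}`. -/
def lexLtP {k : ℕ} (p q : Fin k × Fin k) : Prop :=
  p.1 < q.1 ∨ (p.1 = q.1 ∧ p.2 < q.2)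

/-- Lexicographic strict order on pairs in `{1,…,k} × {0,…,k-2}` (the "positions" of the
concatenated lists `L_1,…,L_k`, within which positions occur in the chosen order). -/
def lexLtPos {k : ℕ} (x y : Fin k × Fin (k - 1)) : Prop :=
  x.1 < y.1 ∨ (x.1 = y.1 ∧ x.2 < y.2)

instance {k : ℕ} : DecidableRel (lexLtP (k := k)) := fun _ _ => by
  unfold lexLtP; infer_instance

instance {k : ℕ} : DecidableRel (lexLtPos (k := k)) := fun _ _ => by
  unfold lexLtPos; infer_instance

/-- The number of inversions of the bijection of `P` sending the lexicographic order of `P`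
to the concatenation of the ordered lists `L_1, L_2, …, L_k` (given by the enumerations
`e m : Fin (k-1) → L_m`); `(-1)` to this power is the sign `(−1)^{s_L}`. -/
def invCount (k : ℕ) (e : Fin k → Fin (k - 1) → Fin k × Fin k) : ℕ :=
  (Finset.univ.filter fun q : (Fin k × Fin (k - 1)) × (Fin k × Fin (k - 1)) =>
    lexLtPos q.1 q.2 ∧ lexLtP (e q.2.1 q.2.2) (e q.1.1 q.1.2)).card

/-- The Vandermonde determinant `∏_{p<q} (c_q - c_p)` of the tuple
`c_r = a_{e(r)}`, `r = 0,…,k-2`. -/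
def vand (k : ℕ) (a : Fin k → Fin k → ℂ) (e : Fin (k - 1) → Fin k × Fin k) : ℂ :=
  ∏ s : Fin (k - 1), ∏ r ∈ Finset.Iio s, (a (e s).1 (e s).2 - a (e r).1 (e r).2)


-- sign = signAux
lemma sign_eq_signAux' {n : ℕ} (σ : Equiv.Perm (Fin n)) :
    Equiv.Perm.sign σ = Equiv.Perm.signAux σ := by
  obtain ⟨l, hl1, hl2⟩ := (Equiv.Perm.truncSwapFactors σ).out
  rw [← hl1]
  clear hl1
  induction l with
  | nil => simp [Equiv.Perm.signAux_one]
  | cons g l ih =>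
    rw [List.prod_cons, Equiv.Perm.sign_mul, Equiv.Perm.signAux_mul,
      ih (fun g hg => hl2 g (List.mem_cons_of_mem _ hg))]
    obtain ⟨x, y, hxy, rfl⟩ := hl2 g List.mem_cons_self
    rw [Equiv.Perm.sign_swap hxy, Equiv.Perm.signAux_swap hxy]

lemma signAux_eq_pow {n : ℕ} (σ : Equiv.Perm (Fin n)) :
    Equiv.Perm.signAux σ =
      (-1) ^ ((Equiv.Perm.finPairsLT n).filter fun x => σ x.1 ≤ σ x.2).card := by
  unfold Equiv.Perm.signAux
  rw [Finset.prod_ite, Finset.prod_const, Finset.prod_const, one_pow, mul_one]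

lemma nat_lex {n a b c d : ℕ} (ha : a < n) (hc : c < n) :
    a + n * b < c + n * d ↔ b < d ∨ (b = d ∧ a < c) := by
  constructor
  · intro h
    rcases lt_trichotomy b d with h' | h' | h'
    · exact Or.inl h'
    · subst h'
      exact Or.inr ⟨rfl, by omega⟩
    · exfalso
      have h2 : n * (d + 1) ≤ n * b := Nat.mul_le_mul_left n h'
      have h3 : n * (d + 1) = n * d + n := by ring
      omega
  · rintro (h | ⟨rfl, h⟩)
    · have h2 : n * (b + 1) ≤ n * d := Nat.mul_le_mul_left n h
      have h3 : n * (b + 1) = n * b + n := by ring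
      omega
    · omega

lemma phi_lt_iff {k : ℕ} (x y : Fin k × Fin (k - 1)) :
    finProdFinEquiv x < finProdFinEquiv y ↔ lexLtPos x y := by
  have hx := x.2.isLt
  have hy := y.2.isLt
  have hvx : ((finProdFinEquiv x : Fin (k*(k-1))) : ℕ) = (x.2 : ℕ) + (k-1) * (x.1 : ℕ) := rfl
  have hvy : ((finProdFinEquiv y : Fin (k*(k-1))) : ℕ) = (y.2 : ℕ) + (k-1) * (y.1 : ℕ) := rfl
  rw [Fin.lt_def, hvx, hvy, nat_lex hx hy]
  unfold lexLtPos
  simp only [Fin.lt_def, Fin.ext_iff]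

lemma sign_perm_eq_pow {k : ℕ} (E : Equiv.Perm (Fin k × Fin (k - 1))) :
    ((Equiv.Perm.sign E : ℤ) : ℂ) =
      (-1) ^ (Finset.univ.filter fun q : (Fin k × Fin (k - 1)) × (Fin k × Fin (k - 1)) =>
        lexLtPos q.1 q.2 ∧ lexLtPos (E q.2) (E q.1)).card := by
  classical
  set φ : Fin k × Fin (k - 1) ≃ Fin (k * (k - 1)) := finProdFinEquiv
  set σ : Equiv.Perm (Fin (k * (k - 1))) := (φ.symm.trans E).trans φ with hσ
  have h1 : Equiv.Perm.sign E = Equiv.Perm.sign σ :=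
    (Equiv.Perm.sign_symm_trans_trans E φ).symm
  have hcard : ((Equiv.Perm.finPairsLT (k * (k-1))).filter fun x => σ x.1 ≤ σ x.2).card =
      (Finset.univ.filter fun q : (Fin k × Fin (k - 1)) × (Fin k × Fin (k - 1)) =>
        lexLtPos q.1 q.2 ∧ lexLtPos (E q.2) (E q.1)).card := by
    refine Finset.card_nbij' (fun x => (φ.symm x.2, φ.symm x.1)) (fun q => ⟨φ q.2, φ q.1⟩)
      ?_ ?_ ?_ ?_
    · rintro ⟨a, b⟩ hab
      rw [Finset.mem_coe, Finset.mem_filter, Equiv.Perm.mem_finPairsLT] at hab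
      obtain ⟨hba, hle⟩ := hab
      rw [Finset.mem_coe, Finset.mem_filter]
      refine ⟨Finset.mem_univ _, ?_, ?_⟩
      · rw [← phi_lt_iff]
        simpa only [φ, Equiv.apply_symm_apply] using hba
      · have hne : E (φ.symm a) ≠ E (φ.symm b) := by
          intro h
          exact absurd (φ.symm.injective (E.injective h)) (by rintro rfl; exact lt_irrefl _ hba)
        have : σ a ≠ σ b := by
          simpa [hσ, Equiv.trans_apply] using fun h => hne (φ.injective h)
        have hlt : σ a < σ b := lt_of_le_of_ne hle this
        rw [← phi_lt_iff]
        simpa [hσ, Equiv.trans_apply] using hlt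
    · rintro ⟨x, y⟩ hq
      rw [Finset.mem_coe, Finset.mem_filter] at hq
      obtain ⟨-, h1, h2⟩ := hq
      rw [Finset.mem_coe, Finset.mem_filter, Equiv.Perm.mem_finPairsLT]
      constructor
      · show φ x < φ y
        rw [phi_lt_iff]; exact h1
      · show σ (φ y) ≤ σ (φ x)
        have : σ (φ y) < σ (φ x) := by
          simp only [hσ, Equiv.trans_apply, Equiv.symm_apply_apply]
          rw [phi_lt_iff]; exact h2
        exact this.le
    · rintro ⟨a, b⟩ -; simp
    · rintro ⟨x, y⟩ -; simp
  rw [h1, sign_eq_signAux', signAux_eq_pow, hcard]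
  push_cast
  rfl

section Aux

open Finset

variable {k : ℕ}

lemma colToRow_val (i : Fin k) (t : Fin (k - 1)) :
    (colToRow k i t : ℕ) = if (t : ℕ) < (i : ℕ) then (t : ℕ) else (t : ℕ) + 1 := by
  unfold colToRow; split <;> rfl

lemma colToRow_ne (i : Fin k) (t : Fin (k - 1)) : colToRow k i t ≠ i := by
  have h := colToRow_val i t
  intro hc
  rw [hc] at h
  split at h <;> omega

/-- The pair `(i,j) ∈ P` corresponding to a row index. -/
def pairOfRow (r : Fin k × Fin (k - 1)) : Fin k × Fin k := (r.1, colToRow k r.1 r.2)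

lemma pairOfRow_mem (r : Fin k × Fin (k - 1)) : pairOfRow r ∈ Pfin k := by
  simp only [Pfin, Finset.mem_filter, Finset.mem_univ, true_and, pairOfRow]
  exact fun h => colToRow_ne r.1 r.2 h.symm

/-- The row index corresponding to a pair (junk when `i = j`). -/
def rowOfPair (hk : 2 ≤ k) (p : Fin k × Fin k) : Fin k × Fin (k - 1) :=
  (p.1, ⟨if (p.2 : ℕ) < (p.1 : ℕ) then (p.2 : ℕ) else (p.2 : ℕ) - 1,
    by have h1 := p.1.isLt; have h2 := p.2.isLt; split <;> omega⟩)

lemma rowOfPair_pairOfRow (hk : 2 ≤ k) (r : Fin k × Fin (k - 1)) :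
    rowOfPair hk (pairOfRow r) = r := by
  have h := colToRow_val r.1 r.2
  unfold rowOfPair pairOfRow
  refine Prod.ext rfl (Fin.ext ?_)
  simp only
  split_ifs at h ⊢ <;> omega

lemma pairOfRow_rowOfPair (hk : 2 ≤ k) {p : Fin k × Fin k} (hp : p ∈ Pfin k) :
    pairOfRow (rowOfPair hk p) = p := by
  have hne : (p.1 : ℕ) ≠ (p.2 : ℕ) := by
    simp only [Pfin, Finset.mem_filter] at hp
    exact fun h => hp.2 (Fin.val_injective h)
  unfold rowOfPair pairOfRow
  refine Prod.ext rfl (Fin.ext ?_)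
  rw [colToRow_val]
  simp only
  have h2 := p.2.isLt
  split_ifs <;> omega

lemma pairOfRow_injective (hk : 2 ≤ k) : Function.Injective (pairOfRow (k := k)) :=
  Function.LeftInverse.injective (rowOfPair_pairOfRow hk)

lemma lexLtPos_iff_lexLtP (r s : Fin k × Fin (k - 1)) :
    lexLtPos r s ↔ lexLtP (pairOfRow r) (pairOfRow s) := by
  have h1 := colToRow_val r.1 r.2
  have h2 := colToRow_val s.1 s.2
  unfold lexLtPos lexLtP pairOfRow
  simp only [Fin.lt_def, Fin.ext_iff]
  constructor
  · rintro (h | ⟨h3, h4⟩)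
    · exact Or.inl h
    · refine Or.inr ⟨h3, ?_⟩
      split_ifs at h1 h2 <;> omega
  · rintro (h | ⟨h3, h4⟩)
    · exact Or.inl h
    · refine Or.inr ⟨h3, ?_⟩
      split_ifs at h1 h2 <;> omega

end Aux


section Aux2

open Finset

variable {k : ℕ}

/-- Pure `λ`-row of the matrix. -/
def u0 (k : ℕ) (a : Fin k → Fin k → ℂ) (p : Fin k × Fin (k - 1)) : Fin k × Fin (k - 1) → ℂ :=
  fun q => if q.1 = p.1 then a p.1 (colToRow k p.1 p.2) ^ (q.2 : ℕ) else 0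

/-- Pure `μ`-row of the matrix. -/
def v0 (k : ℕ) (a : Fin k → Fin k → ℂ) (p : Fin k × Fin (k - 1)) : Fin k × Fin (k - 1) → ℂ :=
  fun q => if q.1 = colToRow k p.1 p.2 then a p.1 (colToRow k p.1 p.2) ^ (q.2 : ℕ) else 0

/-- The "pure" matrix attached to a subset `S` of the rows. -/
def MS (k : ℕ) (a : Fin k → Fin k → ℂ) (S : Finset (Fin k × Fin (k - 1))) :
    Matrix (Fin k × Fin (k - 1)) (Fin k × Fin (k - 1)) ℂ :=
  fun p => S.piecewise (u0 k a) (v0 k a) p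

/-- The block in which row `p` lives, for the choice `S`. -/
def gfun (k : ℕ) (S : Finset (Fin k × Fin (k - 1))) (p : Fin k × Fin (k - 1)) : Fin k :=
  if p ∈ S then p.1 else colToRow k p.1 p.2

lemma prod_ite_mem_compl {α M : Type*} [Fintype α] [DecidableEq α] [CommMonoid M]
    (S : Finset α) (f g : α → M) :
    ∏ p, (if p ∈ S then f p else g p) = (∏ p ∈ S, f p) * ∏ p ∈ Sᶜ, g p := by
  rw [Finset.prod_ite, Finset.filter_mem_eq_inter, Finset.univ_inter]
  congr 1
  congr 1
  ext x
  simp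

lemma theta_expand (a lam mu : Fin k → Fin k → ℂ) :
    theta k a lam mu = ∑ S : Finset (Fin k × Fin (k - 1)),
      ((∏ p ∈ S, lam p.1 (colToRow k p.1 p.2)) * ∏ p ∈ Sᶜ, mu p.1 (colToRow k p.1 p.2)) *
        (MS k a S).det := by
  classical
  set U : (Fin k × Fin (k - 1)) → (Fin k × Fin (k - 1)) → ℂ :=
    fun p => lam p.1 (colToRow k p.1 p.2) • u0 k a p with hU
  set V : (Fin k × Fin (k - 1)) → (Fin k × Fin (k - 1)) → ℂ :=
    fun p => mu p.1 (colToRow k p.1 p.2) • v0 k a p with hV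
  have hXi : Xi k a lam mu = U + V := by
    funext p q
    have hne : q.1 = p.1 → q.1 ≠ colToRow k p.1 p.2 := by
      intro h1 h2
      exact colToRow_ne p.1 p.2 (h2.symm.trans h1)
    simp only [Xi, hU, hV, Pi.add_apply, u0, v0, smul_eq_mul, Pi.smul_apply]
    by_cases h1 : q.1 = p.1
    · rw [if_pos h1, if_pos h1, if_neg (hne h1), mul_zero, add_zero]
    · rw [if_neg h1, if_neg h1, mul_zero, zero_add]
      by_cases h2 : q.1 = colToRow k p.1 p.2
      · rw [if_pos h2, if_pos h2]
      · rw [if_neg h2, if_neg h2, mul_zero]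
  have key : ∀ S : Finset (Fin k × Fin (k - 1)),
      (Matrix.detRowAlternating (S.piecewise U V) : ℂ) =
      ((∏ p ∈ S, lam p.1 (colToRow k p.1 p.2)) * ∏ p ∈ Sᶜ, mu p.1 (colToRow k p.1 p.2)) *
        (MS k a S).det := by
    intro S
    have hpw : S.piecewise U V =
        fun p => (if p ∈ S then lam p.1 (colToRow k p.1 p.2)
          else mu p.1 (colToRow k p.1 p.2)) • (MS k a S p) := by
      funext p
      by_cases h : p ∈ S
      · rw [Finset.piecewise_eq_of_mem _ _ _ h, if_pos h]
        unfold MS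
        rw [Finset.piecewise_eq_of_mem _ _ _ h]
      · rw [Finset.piecewise_eq_of_notMem _ _ _ h, if_neg h]
        unfold MS
        rw [Finset.piecewise_eq_of_notMem _ _ _ h]
    rw [hpw]
    have := (Matrix.detRowAlternating :
        ((Fin k × Fin (k - 1)) → ℂ) [⋀^(Fin k × Fin (k - 1))]→ₗ[ℂ] ℂ).toMultilinearMap.map_smul_univ
      (fun p => if p ∈ S then lam p.1 (colToRow k p.1 p.2) else mu p.1 (colToRow k p.1 p.2))
      (MS k a S)
    rw [show (Matrix.detRowAlternating (fun p => (if p ∈ S then lam p.1 (colToRow k p.1 p.2)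
          else mu p.1 (colToRow k p.1 p.2)) • (MS k a S p)) : ℂ) =
        (∏ p, (if p ∈ S then lam p.1 (colToRow k p.1 p.2) else mu p.1 (colToRow k p.1 p.2))) •
          Matrix.detRowAlternating (MS k a S) from this]
    rw [prod_ite_mem_compl, smul_eq_mul]
    rfl
  calc theta k a lam mu = Matrix.detRowAlternating (U + V) := by
        unfold theta
        rw [hXi]
        rfl
    _ = ∑ S : Finset (Fin k × Fin (k - 1)), Matrix.detRowAlternating (S.piecewise U V) :=
        (Matrix.detRowAlternating :
          ((Fin k × Fin (k - 1)) → ℂ) [⋀^(Fin k × Fin (k - 1))]→ₗ[ℂ] ℂ).toMultilinearMap.map_add_univ U V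
    _ = _ := Finset.sum_congr rfl fun S _ => key S

lemma MS_apply_ne (a : Fin k → Fin k → ℂ) {S : Finset (Fin k × Fin (k - 1))}
    {p q : Fin k × Fin (k - 1)} (h : q.1 ≠ gfun k S p) : MS k a S p q = 0 := by
  unfold MS gfun at *
  by_cases hp : p ∈ S
  · rw [Finset.piecewise_eq_of_mem _ _ _ hp]
    rw [if_pos hp] at h
    exact if_neg h
  · rw [Finset.piecewise_eq_of_notMem _ _ _ hp]
    rw [if_neg hp] at h
    exact if_neg h

lemma card_col (m : Fin k) :
    (Finset.univ.filter fun q : Fin k × Fin (k - 1) => q.1 = m).card = k - 1 := by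
  have h : (Finset.univ.filter fun q : Fin k × Fin (k - 1) => q.1 = m)
      = Finset.univ.map ⟨fun t : Fin (k - 1) => (m, t),
          fun a b hab => by simpa [Prod.ext_iff] using hab⟩ := by
    ext ⟨q1, q2⟩
    simp only [mem_filter, mem_univ, true_and, Finset.mem_map, Function.Embedding.coeFn_mk,
      Prod.mk.injEq]
    constructor
    · rintro rfl
      exact ⟨q2, rfl⟩
    · rintro ⟨t, h⟩
      exact (congrArg Prod.fst h).symm
  rw [h, Finset.card_map, Finset.card_univ, Fintype.card_fin]

lemma det_MS_zero (a : Fin k → Fin k → ℂ) (S : Finset (Fin k × Fin (k - 1))) (m0 : Fin k)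
    (hm0 : (Finset.univ.filter fun p : Fin k × Fin (k - 1) => gfun k S p = m0).card ≠ k - 1) :
    (MS k a S).det = 0 := by
  classical
  rw [Matrix.det_apply]
  refine Finset.sum_eq_zero fun σ _ => ?_
  suffices h : ∃ q : Fin k × Fin (k - 1), MS k a S (σ q) q = 0 by
    obtain ⟨q, hq⟩ := h
    have hz := Finset.prod_eq_zero (f := fun i => MS k a S (σ i) i) (Finset.mem_univ q) hq
    rw [hz, smul_zero]
  by_contra hno
  push_neg at hno
  have hall : ∀ q : Fin k × Fin (k - 1), q.1 = gfun k S (σ q) := by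
    intro q
    by_contra hne
    exact hno q (MS_apply_ne a hne)
  have hle : ∀ m : Fin k, k - 1 ≤
      (Finset.univ.filter fun p : Fin k × Fin (k - 1) => gfun k S p = m).card := by
    intro m
    have hco := Finset.card_le_card_of_injOn σ (s := Finset.univ.filter fun q : Fin k × Fin (k - 1) => q.1 = m)
      (t := Finset.univ.filter fun p : Fin k × Fin (k - 1) => gfun k S p = m)
      (fun q hq => by
        simp only [Finset.mem_coe, mem_filter, mem_univ, true_and] at hq ⊢
        rw [← hall q, hq])
      (fun x _ y _ hxy => σ.injective hxy)
    rwa [card_col] at hco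
  have hsum : ∑ m : Fin k,
      (Finset.univ.filter fun p : Fin k × Fin (k - 1) => gfun k S p = m).card
      = (Finset.univ : Finset (Fin k × Fin (k - 1))).card :=
    (Finset.card_eq_sum_card_fiberwise fun p _ => Finset.mem_univ (gfun k S p)).symm
  have hcard : (Finset.univ : Finset (Fin k × Fin (k - 1))).card = k * (k - 1) := by
    simp [Finset.card_univ]
  have hlt : ∑ _m : Fin k, (k - 1) < ∑ m : Fin k,
      (Finset.univ.filter fun p : Fin k × Fin (k - 1) => gfun k S p = m).card :=
    Finset.sum_lt_sum (fun m _ => hle m)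
      ⟨m0, Finset.mem_univ m0, lt_of_le_of_ne (hle m0) (Ne.symm hm0)⟩
  rw [hsum, hcard, Finset.sum_const, Finset.card_univ, Fintype.card_fin, smul_eq_mul] at hlt
  omega

lemma Lset_subset_Pfin {L : Finset (Fin k × Fin k)} (hL : L ⊆ Pfin k) (m : Fin k) :
    Lset k L m ⊆ Pfin k := by
  intro x hx
  simp only [Lset, mem_union, mem_filter, mem_sdiff] at hx
  rcases hx with ⟨h, -⟩ | ⟨⟨h, -⟩, -⟩
  exacts [hL h, h]

lemma Lset_cases {L : Finset (Fin k × Fin k)} {x : Fin k × Fin k} {m : Fin k}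
    (hx : x ∈ Lset k L m) :
    (x ∈ L ∧ x.1 = m) ∨ (x ∈ Pfin k ∧ x ∉ L ∧ x.2 = m) := by
  simp only [Lset, mem_union, mem_filter, mem_sdiff] at hx
  tauto

lemma Lset_disjoint {L : Finset (Fin k × Fin k)} {x : Fin k × Fin k} {m m' : Fin k}
    (h1 : x ∈ Lset k L m) (h2 : x ∈ Lset k L m') : m = m' := by
  rcases Lset_cases h1 with ⟨hL, e1⟩ | ⟨-, hL, e1⟩ <;>
    rcases Lset_cases h2 with ⟨hL', e2⟩ | ⟨-, hL', e2⟩ <;> first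
    | (exact e1 ▸ e2 ▸ rfl)
    | (exact absurd hL hL')
    | (exact absurd hL' hL)

lemma fiber_image (hk : 2 ≤ k) (S : Finset (Fin k × Fin (k - 1))) (m : Fin k) :
    Lset k (S.image pairOfRow) m =
      (Finset.univ.filter fun p => gfun k S p = m).image pairOfRow := by
  ext x
  constructor
  · intro hx
    rcases Lset_cases hx with ⟨hxL, hx1⟩ | ⟨hxP, hxL, hx2⟩
    · obtain ⟨r, hr, rfl⟩ := Finset.mem_image.mp hxL
      refine Finset.mem_image_of_mem _ ?_
      rw [mem_filter]; simp only [mem_univ, true_and, gfun, if_pos hr]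
      exact hx1
    · refine Finset.mem_image.mpr ⟨rowOfPair hk x, ?_, pairOfRow_rowOfPair hk hxP⟩
      have hrS : rowOfPair hk x ∉ S := by
        intro hc
        apply hxL
        have h2 := Finset.mem_image_of_mem pairOfRow hc
        rwa [pairOfRow_rowOfPair hk hxP] at h2
      rw [mem_filter]; simp only [mem_univ, true_and, gfun, if_neg hrS]
      have h3 : colToRow k (rowOfPair hk x).1 (rowOfPair hk x).2 = x.2 :=
        congrArg Prod.snd (pairOfRow_rowOfPair hk hxP)
      rw [h3]
      exact hx2
  · intro hx
    obtain ⟨r, hr, rfl⟩ := Finset.mem_image.mp hx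
    rw [mem_filter] at hr; simp only [mem_univ, true_and, gfun] at hr
    by_cases hrS : r ∈ S
    · rw [if_pos hrS] at hr
      simp only [Lset, mem_union, mem_filter]
      exact Or.inl ⟨Finset.mem_image_of_mem _ hrS, hr⟩
    · rw [if_neg hrS] at hr
      simp only [Lset, mem_union, mem_filter, mem_sdiff]
      refine Or.inr ⟨⟨pairOfRow_mem r, fun hc => hrS ?_⟩, hr⟩
      exact ((pairOfRow_injective hk).mem_finset_image).mp hc

lemma Lset_card_eq (hk : 2 ≤ k) (S : Finset (Fin k × Fin (k - 1))) (m : Fin k) :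
    (Lset k (S.image pairOfRow) m).card =
      (Finset.univ.filter fun p => gfun k S p = m).card := by
  rw [fiber_image hk, Finset.card_image_of_injective _ (pairOfRow_injective hk)]

end Aux2


section Aux3

open Finset

variable {k : ℕ}

lemma prod_Ioi_eq_prod_Iio (n : ℕ) (f : Fin n → ℂ) :
    ∏ i, ∏ j ∈ Finset.Ioi i, (f j - f i) = ∏ s, ∏ r ∈ Finset.Iio s, (f s - f r) := by
  rw [Finset.prod_sigma', Finset.prod_sigma']
  refine Finset.prod_nbij' (fun x => ⟨x.2, x.1⟩) (fun x => ⟨x.2, x.1⟩) ?_ ?_ ?_ ?_ ?_ <;> simp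

lemma det_MS_regular (hk : 2 ≤ k) (a : Fin k → Fin k → ℂ) (S : Finset (Fin k × Fin (k - 1)))
    (eL : Fin k → Fin (k - 1) → Fin k × Fin k)
    (hmem : ∀ m r, eL m r ∈ Lset k (S.image pairOfRow) m)
    (hinj : ∀ m, Function.Injective (eL m)) :
    (MS k a S).det = (-1 : ℂ) ^ invCount k eL * ∏ m, vand k a (eL m) := by
  classical
  have hLsub : S.image pairOfRow ⊆ Pfin k := by
    intro x hx
    obtain ⟨r, -, rfl⟩ := Finset.mem_image.mp hx
    exact pairOfRow_mem r
  have hmemP : ∀ m r, eL m r ∈ Pfin k := fun m r => Lset_subset_Pfin hLsub m (hmem m r)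
  set f : (Fin k × Fin (k - 1)) → (Fin k × Fin (k - 1)) :=
    fun x => rowOfPair hk (eL x.1 x.2) with hf
  have hpf : ∀ x : Fin k × Fin (k - 1), pairOfRow (f x) = eL x.1 x.2 :=
    fun x => pairOfRow_rowOfPair hk (hmemP x.1 x.2)
  have hfinj : Function.Injective f := by
    intro x y hxy
    have h1 : eL x.1 x.2 = eL y.1 y.2 := by rw [← hpf x, ← hpf y, hxy]
    have h2 : x.1 = y.1 := Lset_disjoint (hmem x.1 x.2) (by rw [h1]; exact hmem y.1 y.2)
    have h3 : x.2 = y.2 := by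
      apply hinj x.1
      rw [h2] at h1 ⊢
      exact h1
    exact Prod.ext h2 h3
  have hbij : Function.Bijective f := Finite.injective_iff_bijective.mp hfinj
  set E : Equiv.Perm (Fin k × Fin (k - 1)) := Equiv.ofBijective f hbij with hE
  have hEapp : ∀ x, E x = f x := fun x => rfl
  have entry : ∀ (m : Fin k) (r : Fin (k - 1)) (m' : Fin k) (n : Fin (k - 1)),
      MS k a S (f (m, r)) (m', n) =
        if m' = m then a (eL m r).1 (eL m r).2 ^ (n : ℕ) else 0 := by
    intro m r m' n
    have hx := hmem m r
    have hrow : pairOfRow (f (m, r)) = eL m r := hpf (m, r)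
    have hrow1 : (f (m, r)).1 = (eL m r).1 := congrArg Prod.fst hrow
    have hrow2 : colToRow k (f (m, r)).1 (f (m, r)).2 = (eL m r).2 := congrArg Prod.snd hrow
    rcases Lset_cases hx with ⟨hxL, hx1⟩ | ⟨-, hxnL, hx2⟩
    · have hS : f (m, r) ∈ S := by
        obtain ⟨s, hs, hsx⟩ := Finset.mem_image.mp hxL
        have hfs : f (m, r) = s := by
          show rowOfPair hk (eL m r) = s
          rw [← hsx, rowOfPair_pairOfRow hk]
        rwa [hfs]
      unfold MS
      rw [Finset.piecewise_eq_of_mem _ _ _ hS]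
      simp only [u0]
      rw [hrow2, hrow1, hx1]
    · have hS : f (m, r) ∉ S := by
        intro hc
        apply hxnL
        have h5 := Finset.mem_image_of_mem pairOfRow hc
        rwa [hrow] at h5
      unfold MS
      rw [Finset.piecewise_eq_of_notMem _ _ _ hS]
      simp only [v0]
      rw [hrow2, hrow1, hx2]
  have hB : (MS k a S).submatrix E id =
      (Matrix.blockDiagonal fun m => Matrix.vandermonde fun r =>
        a (eL m r).1 (eL m r).2).submatrix
        (Equiv.prodComm (Fin k) (Fin (k - 1))) (Equiv.prodComm (Fin k) (Fin (k - 1))) := by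
    ext ⟨m, r⟩ ⟨m', n⟩
    rw [Matrix.submatrix_apply, Matrix.submatrix_apply]
    show MS k a S (f (m, r)) (m', n) = _
    rw [entry m r m' n]
    show _ = Matrix.blockDiagonal _ (r, m) (n, m')
    rw [Matrix.blockDiagonal_apply]
    by_cases h : m' = m
    · subst h
      rw [if_pos rfl, if_pos rfl, Matrix.vandermonde_apply]
    · rw [if_neg h, if_neg (fun hh => h hh.symm)]
  have hdet1 := Matrix.det_permute E (MS k a S)
  have hdet2 : ((Matrix.blockDiagonal fun m => Matrix.vandermonde fun r =>
      a (eL m r).1 (eL m r).2).submatrix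
        (Equiv.prodComm (Fin k) (Fin (k - 1))) (Equiv.prodComm (Fin k) (Fin (k - 1)))).det =
      ∏ m, vand k a (eL m) := by
    rw [Matrix.det_submatrix_equiv_self, Matrix.det_blockDiagonal]
    refine Finset.prod_congr rfl fun m _ => ?_
    rw [Matrix.det_vandermonde]
    unfold vand
    exact prod_Ioi_eq_prod_Iio _ _
  have hsign : ((Equiv.Perm.sign E : ℤ) : ℂ) = (-1) ^ invCount k eL := by
    rw [sign_perm_eq_pow E]
    congr 1
    unfold invCount
    apply congrArg Finset.card
    apply Finset.filter_congr
    intro q _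
    have h1 : lexLtPos (E q.2) (E q.1) ↔ lexLtP (eL q.2.1 q.2.2) (eL q.1.1 q.1.2) := by
      rw [lexLtPos_iff_lexLtP, hEapp, hEapp, hpf, hpf]
    rw [h1]
  have h4 : ((Equiv.Perm.sign E : ℤ) : ℂ) * (MS k a S).det = ∏ m, vand k a (eL m) := by
    rw [← hdet2, ← hB]
    exact_mod_cast hdet1.symm
  have hss : ((Equiv.Perm.sign E : ℤ) : ℂ) * ((Equiv.Perm.sign E : ℤ) : ℂ) = 1 := by
    rcases Int.units_eq_one_or (Equiv.Perm.sign E) with h | h <;> rw [h] <;> norm_num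
  calc (MS k a S).det
      = (((Equiv.Perm.sign E : ℤ) : ℂ) * ((Equiv.Perm.sign E : ℤ) : ℂ)) * (MS k a S).det := by
        rw [hss, one_mul]
    _ = ((Equiv.Perm.sign E : ℤ) : ℂ) * (∏ m, vand k a (eL m)) := by
        rw [mul_assoc, h4]
    _ = (-1 : ℂ) ^ invCount k eL * ∏ m, vand k a (eL m) := by rw [hsign]

end Aux3

/-- the coefficient formula
`det Ξ = Σ_{L regular} (−1)^{s_L} ∏_m V(L_m) · ∏_{(i,j)∈L} λ_{ij} · ∏_{(i,j)∉L} μ_{ij}`,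
for any choice, for each regular `L` and each `m`, of a linear ordering (i.e. an injective
enumeration `e L m : {0,…,k-2} → L_m`, necessarily bijective) of `L_m`; in particular the
value of the coefficient is independent of the choice of orderings. -/
theorem theta_eq_sum_regular_coeffs (k : ℕ) (hk : 2 ≤ k) (a lam mu : Fin k → Fin k → ℂ)
    (e : Finset (Fin k × Fin k) → Fin k → Fin (k - 1) → Fin k × Fin k)
    (hmem : ∀ L : Finset (Fin k × Fin k), L ⊆ Pfin k → IsRegular k L →
      ∀ (m : Fin k) (r : Fin (k - 1)), e L m r ∈ Lset k L m)
    (hinj : ∀ L : Finset (Fin k × Fin k), L ⊆ Pfin k → IsRegular k L →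
      ∀ m : Fin k, Function.Injective (e L m)) :
    theta k a lam mu =
      ∑ L ∈ (Pfin k).powerset.filter (fun L => ∀ i : Fin k, (Lset k L i).card = k - 1),
        ((-1 : ℂ) ^ invCount k (e L) * ∏ m : Fin k, vand k a (e L m)) *
          (∏ p ∈ L, lam p.1 p.2) * ∏ p ∈ Pfin k \ L, mu p.1 p.2 := by
  classical
  rw [theta_expand a lam mu]
  have key : ∀ S : Finset (Fin k × Fin (k - 1)),
      ((∏ p ∈ S, lam p.1 (colToRow k p.1 p.2)) * ∏ p ∈ Sᶜ, mu p.1 (colToRow k p.1 p.2)) *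
        (MS k a S).det =
      (if ∀ i : Fin k, (Lset k (S.image pairOfRow) i).card = k - 1 then
        ((-1 : ℂ) ^ invCount k (e (S.image pairOfRow)) *
            ∏ m : Fin k, vand k a (e (S.image pairOfRow) m)) *
          (∏ p ∈ S.image pairOfRow, lam p.1 p.2) *
          ∏ p ∈ Pfin k \ S.image pairOfRow, mu p.1 p.2
      else 0) := by
    intro S
    have hLsub : S.image pairOfRow ⊆ Pfin k := by
      intro x hx
      obtain ⟨r, -, rfl⟩ := Finset.mem_image.mp hx
      exact pairOfRow_mem r
    by_cases hreg : ∀ i : Fin k, (Lset k (S.image pairOfRow) i).card = k - 1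
    · rw [if_pos hreg]
      have hprodlam : ∏ p ∈ S.image pairOfRow, lam p.1 p.2 =
          ∏ p ∈ S, lam p.1 (colToRow k p.1 p.2) :=
        Finset.prod_image fun x _ y _ hxy => pairOfRow_injective hk hxy
      have hcompl : Pfin k \ S.image pairOfRow = Sᶜ.image pairOfRow := by
        have h1 : (Finset.univ : Finset (Fin k × Fin (k - 1))).image pairOfRow = Pfin k := by
          ext x
          simp only [Finset.mem_image, Finset.mem_univ, true_and]
          constructor
          · rintro ⟨r, rfl⟩
            exact pairOfRow_mem r
          · intro hx
            exact ⟨rowOfPair hk x, pairOfRow_rowOfPair hk hx⟩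
        rw [Finset.compl_eq_univ_sdiff, Finset.image_sdiff _ _ (pairOfRow_injective hk), h1]
      have hprodmu : ∏ p ∈ Pfin k \ S.image pairOfRow, mu p.1 p.2 =
          ∏ p ∈ Sᶜ, mu p.1 (colToRow k p.1 p.2) := by
        rw [hcompl]
        exact Finset.prod_image fun x _ y _ hxy => pairOfRow_injective hk hxy
      have hdet := det_MS_regular hk a S (e (S.image pairOfRow))
        (hmem _ hLsub hreg) (hinj _ hLsub hreg)
      rw [← hprodlam, ← hprodmu, hdet]
      ring
    · rw [if_neg hreg]
      push_neg at hreg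
      obtain ⟨m0, hm0⟩ := hreg
      rw [det_MS_zero a S m0 (by rw [← Lset_card_eq hk]; exact hm0), mul_zero]
  rw [Finset.sum_congr rfl fun S _ => key S, Finset.sum_filter]
  exact Finset.sum_nbij' (fun S => S.image pairOfRow) (fun L => L.image (rowOfPair hk))
    (fun S _ => Finset.mem_powerset.mpr fun x hx => by
      obtain ⟨r, -, rfl⟩ := Finset.mem_image.mp hx
      exact pairOfRow_mem r)
    (fun L _ => Finset.mem_univ _)
    (fun S _ => by
      show Finset.image (rowOfPair hk) (Finset.image pairOfRow S) = S
      rw [Finset.image_image,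
        show (rowOfPair hk ∘ pairOfRow (k := k)) = id from funext (rowOfPair_pairOfRow hk),
        Finset.image_id])
    (fun L hL => by
      show Finset.image pairOfRow (Finset.image (rowOfPair hk) L) = L
      rw [Finset.image_image,
        show Finset.image (pairOfRow ∘ rowOfPair hk) L = Finset.image id L from
          Finset.image_congr fun x hx => pairOfRow_rowOfPair hk (Finset.mem_powerset.mp hL hx),
        Finset.image_id])
    (fun S _ => rfl)


end

end ReducibleSpectral
end

section
/- Let k ≥ 2, let λ_{ij}, μ_{ij} be nonzero complex numbers for (i,j) ∈ P, and let y_1,…,y_k ∈ ℂ be such that for every i and every j ≠ i one has y_i ≠ a_{ij} and y_i ≠ a_{ji}. Then the following are equivalent: (1) there exist polynomials Q_1,…,Q_k ∈ ℂ[ζ], each of degree at most k−1 and not all identically zero, such that Q_i(y_i) = 0 for every i and λ_{ij}·Q_i(a_{ij}) + μ_{ij}·Q_j(a_{ij}) = 0 for every (i,j) ∈ P; (2) Λ(y_1,…,y_k) = 0, where Λ(u_1,…,u_k) = ϑ( (λ_{ij}·(a_{ij} − u_i)), (μ_{ij}·(a_{ij} − u_j)) ). -/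
/-!
A polynomial `Q_i` of degree `≤ k - 1` vanishing at `y_i` is `(ζ - y_i) R_i` with `deg R_i < k - 1`,
and then the matching conditions read
`λ_{ij} (a_{ij} - y_i) R_i(a_{ij}) + μ_{ij} (a_{ij} - y_j) R_j(a_{ij}) = 0`.
The row `(i, j)` of `Ξ(λ, μ)` applied to the stacked coefficient vectors of the `R_m` computes
exactly `λ_{ij} R_i(a_{ij}) + μ_{ij} R_j(a_{ij})`, so such a nonzero family exists iff the matrix
`Ξ((λ_{ij} (a_{ij} - y_i)), (μ_{ij} (a_{ij} - y_j)))` is singular, i.e. iff `Λ(y) = 0`.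
-/

namespace ReducibleSpectral

noncomputable section

/-- The function `Λ(u_1,…,u_k) = ϑ((λ_{ij}·(a_{ij} − u_i)), (μ_{ij}·(a_{ij} − u_j)))`. -/
def LambdaFun (k : ℕ) (a lam mu : Fin k → Fin k → ℂ) (u : Fin k → ℂ) : ℂ :=
  theta k a (fun i j => lam i j * (a i j - u i)) (fun i j => mu i j * (a i j - u j))

open Polynomial Matrix

lemma degree_X_sub_C_mul_le_iff {R : Type*} [CommRing R] [Nontrivial R] (y : R) (r : R[X])
    (m : ℕ) : ((X - C y) * r).degree ≤ (m : WithBot ℕ) ↔ r.degree < m := by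
  rw [mul_comm, (monic_X_sub_C y).degree_mul, degree_X_sub_C]
  induction r.degree with
  | bot => simp
  | coe d => exact WithBot.coe_le_coe.trans Nat.add_one_le_iff |>.trans WithBot.coe_lt_coe.symm

lemma degree_le_and_eval_eq_zero_iff_eq_X_sub_C_mul {R : Type*} [CommRing R] [Nontrivial R]
    {p : R[X]} {y : R} {m : ℕ} :
    p.degree ≤ m ∧ p.eval y = 0 ↔ ∃ r : R[X]_m, p = (X - C y) * (r : R[X]) := by
  constructor
  · rintro ⟨hdeg, hroot⟩
    have hdiv := mul_divByMonic_eq_iff_isRoot.2 hroot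
    rw [← hdiv, degree_X_sub_C_mul_le_iff] at hdeg
    exact ⟨⟨p /ₘ (X - C y), mem_degreeLT.2 hdeg⟩, hdiv.symm⟩
  · rintro ⟨r, rfl⟩
    exact ⟨(degree_X_sub_C_mul_le_iff y r m).2 (mem_degreeLT.1 r.2), by simp⟩

def coeffsEquiv (R ι : Type*) [CommRing R] (m : ℕ) : (ι → R[X]_m) ≃ₗ[R] (ι × Fin m → R) :=
  (LinearEquiv.piCongrRight fun _ => degreeLTEquiv R m).trans (LinearEquiv.curry R R ι (Fin m)).symm

lemma colToRow_ne_self (k : ℕ) (i : Fin k) (t : Fin (k - 1)) : colToRow k i t ≠ i := by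
  unfold colToRow
  split <;> simp only [ne_eq, Fin.ext_iff] <;> omega

lemma exists_colToRow_eq (k : ℕ) {i j : Fin k} (hij : i ≠ j) :
    ∃ t : Fin (k - 1), colToRow k i t = j := by
  have hij' : (i : ℕ) ≠ j := Fin.val_ne_of_ne hij
  have := j.isLt
  by_cases hji : (j : ℕ) < i
  · exact ⟨⟨j, by omega⟩, by simp [colToRow, hji]⟩
  · refine ⟨⟨j - 1, by omega⟩, Fin.ext ?_⟩
    simp only [colToRow, show ¬ (j : ℕ) - 1 < i by omega, ↓reduceIte]
    omega

lemma Xi_mulVec_apply (k : ℕ) (a lam mu : Fin k → Fin k → ℂ) (c : Fin k × Fin (k - 1) → ℂ)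
    (i : Fin k) (t : Fin (k - 1)) :
    (Xi k a lam mu *ᵥ c) (i, t) =
      lam i (colToRow k i t) * ∑ n, c (i, n) * a i (colToRow k i t) ^ (n : ℕ) +
      mu i (colToRow k i t) * ∑ n, c (colToRow k i t, n) * a i (colToRow k i t) ^ (n : ℕ) := by
  have hne := colToRow_ne_self k i t
  rw [Matrix.mulVec, dotProduct, Fintype.sum_prod_type,
    Fintype.sum_eq_add i (colToRow k i t) hne.symm fun m hm => by simp [Xi, hm.1, hm.2]]
  simp [Xi, hne, Finset.mul_sum, mul_assoc, mul_comm (a _ _ ^ _)]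

lemma Xi_mulVec_coeffsEquiv_apply (k : ℕ) (a lam mu : Fin k → Fin k → ℂ)
    (P : Fin k → ℂ[X]_(k - 1)) (i : Fin k) (t : Fin (k - 1)) :
    (Xi k a lam mu *ᵥ coeffsEquiv ℂ (Fin k) (k - 1) P) (i, t) =
      lam i (colToRow k i t) * (P i : ℂ[X]).eval (a i (colToRow k i t)) +
      mu i (colToRow k i t) * (P (colToRow k i t) : ℂ[X]).eval (a i (colToRow k i t)) := by
  rw [Xi_mulVec_apply, eval_eq_sum_degreeLTEquiv (P i).2, eval_eq_sum_degreeLTEquiv (P _).2]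
  rfl

lemma exists_ne_zero_Xi_mulVec_eq_zero_iff (k : ℕ) (a lam mu : Fin k → Fin k → ℂ) :
    (∃ c ≠ 0, Xi k a lam mu *ᵥ c = 0) ↔
      ∃ P : Fin k → ℂ[X]_(k - 1), P ≠ 0 ∧ ∀ i j, i ≠ j →
        lam i j * (P i : ℂ[X]).eval (a i j) + mu i j * (P j : ℂ[X]).eval (a i j) = 0 := by
  refine (Equiv.exists_congr (coeffsEquiv ℂ (Fin k) (k - 1)).toEquiv fun {P} =>
    and_congr (coeffsEquiv ℂ (Fin k) (k - 1)).map_ne_zero_iff.symm ?_).symm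
  simp only [funext_iff, Prod.forall, Pi.zero_apply, LinearEquiv.coe_toEquiv,
    Xi_mulVec_coeffsEquiv_apply]
  constructor
  · exact fun h i t => h i _ (colToRow_ne_self k i t).symm
  · intro h i j hij
    obtain ⟨t, rfl⟩ := exists_colToRow_eq k hij
    exact h i t

theorem section_vanishing_iff_Lambda_eq_zero_general (k : ℕ)
    (a lam mu : Fin k → Fin k → ℂ)
    (y : Fin k → ℂ) :
    (∃ Q : Fin k → Polynomial ℂ,
        (∀ i, (Q i).degree ≤ (k - 1 : ℕ)) ∧
        (∃ i, Q i ≠ 0) ∧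
        (∀ i, (Q i).eval (y i) = 0) ∧
        (∀ i j : Fin k, i ≠ j →
          lam i j * (Q i).eval (a i j) + mu i j * (Q j).eval (a i j) = 0)) ↔
      LambdaFun k a lam mu y = 0 := by
  rw [LambdaFun, theta, ← Matrix.exists_mulVec_eq_zero_iff, exists_ne_zero_Xi_mulVec_eq_zero_iff]
  constructor
  · rintro ⟨Q, hdeg, ⟨i₀, hi₀⟩, hroot, hmatch⟩
    choose P hQP using fun i => degree_le_and_eval_eq_zero_iff_eq_X_sub_C_mul.1 ⟨hdeg i, hroot i⟩
    refine ⟨P, fun h => hi₀ (by simp [hQP, h]), fun i j hij => ?_⟩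
    have := hmatch i j hij
    simp only [hQP, eval_mul, eval_sub, eval_X, eval_C] at this
    linear_combination this
  · rintro ⟨P, hP, hmatch⟩
    obtain ⟨i₀, hi₀⟩ := Function.ne_iff.1 hP
    have hQ i := (degree_le_and_eval_eq_zero_iff_eq_X_sub_C_mul (y := y i)).2 ⟨P i, rfl⟩
    refine ⟨fun i => (X - C (y i)) * (P i : ℂ[X]), fun i => (hQ i).1,
      ⟨i₀, mul_ne_zero (X_sub_C_ne_zero _) (by simpa using hi₀)⟩, fun i => (hQ i).2,
      fun i j hij => ?_⟩
    simp only [eval_mul, eval_sub, eval_X, eval_C]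
    linear_combination hmatch i j hij

/-- for nonzero `λ_{ij}, μ_{ij}` and points `y_i` avoiding the images of the
intersection points, there is a nonzero tuple of polynomials of degree at most `k−1`
vanishing at the `y_i` and satisfying the matching conditions iff `Λ(y_1,…,y_k) = 0`. -/
theorem section_vanishing_iff_Lambda_eq_zero (k : ℕ) (hk : 2 ≤ k)
    (a lam mu : Fin k → Fin k → ℂ)
    (hlam : ∀ i j : Fin k, i ≠ j → lam i j ≠ 0)
    (hmu : ∀ i j : Fin k, i ≠ j → mu i j ≠ 0)
    (y : Fin k → ℂ)
    (hy : ∀ i j : Fin k, i ≠ j → y i ≠ a i j ∧ y i ≠ a j i) :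
    (∃ Q : Fin k → Polynomial ℂ,
        (∀ i, (Q i).degree ≤ (k - 1 : ℕ)) ∧
        (∃ i, Q i ≠ 0) ∧
        (∀ i, (Q i).eval (y i) = 0) ∧
        (∀ i j : Fin k, i ≠ j →
          lam i j * (Q i).eval (a i j) + mu i j * (Q j).eval (a i j) = 0)) ↔
      LambdaFun k a lam mu y = 0 :=
  section_vanishing_iff_Lambda_eq_zero_general k a lam mu y

end

end ReducibleSpectral
end
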